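/- arXiv:2308.02938 — 2 statements merged into one kernel-verified Lean document; each statement's English description precedes it below -/
import Mathlib

section
/- Every closed walk in the hypercube graph H(d,2) based at the all-zeros vertex 0 is ×-homotopic rel endpoints to the trivial (length-0) walk at 0. -/
/-- The Hamming graph `H(d,q)`: vertices are functions `Fin d → Fin q`,
adjacent iff they differ in exactly one coordinate. -/
def hammingGraph (d q : ℕ) : SimpleGraph (Fin d → Fin q) where
  Adj v w := ∃! i, v i ≠ w i
  symm := by
    constructor
    rintro v w ⟨i, hi, hu⟩
    exact ⟨i, hi.symm, fun j hj => hu j hj.symm⟩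
  loopless := by
    constructor
    rintro v ⟨i, hi, -⟩
    exact hi rfl

/-- `l` is (the list of vertices of) a walk in `G` from `a` to `b`. -/
def IsWalkOn {V : Type*} (G : SimpleGraph V) (a b : V) (l : List V) : Prop :=
  l.Chain' G.Adj ∧ l.head? = some a ∧ l.getLast? = some b

/-- Elementary moves on walks: prunes (and their inverses, anti-prunes,
via symmetry) and spider moves. -/
inductive Move {V : Type*} (G : SimpleGraph V) : List V → List V → Prop
  | prune (xs ys : List V) (u v : V) (huv : G.Adj u v) :
      Move G (xs ++ u :: v :: u :: ys) (xs ++ u :: ys)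
  | spider (xs ys : List V) (u v v' w : V) (hne : v ≠ v')
      (h1 : G.Adj u v') (h2 : G.Adj v' w) :
      Move G (xs ++ u :: v :: w :: ys) (xs ++ u :: v' :: w :: ys)

/-- ×-homotopy rel endpoints: the equivalence relation generated by prunes,
anti-prunes and spider moves. -/
def Homotopic {V : Type*} (G : SimpleGraph V) : List V → List V → Prop :=
  Relation.EqvGen (Move G)

/-- Concatenation of walks sharing an endpoint. -/
def wcat {V : Type*} (l1 l2 : List V) : List V := l1 ++ l2.tail

/-- Concatenation of a list of closed walks based at `z`. -/
def wprod {V : Type*} (z : V) (ws : List (List V)) : List V := ws.foldr wcat [z]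

/-- `u` and `v` differ exactly in coordinate `i`. -/
def DiffAt {d q : ℕ} (u v : Fin d → Fin q) (i : Fin d) : Prop :=
  u i ≠ v i ∧ ∀ j, j ≠ i → u j = v j

/-- A ground walk in coordinate `i`: a closed 3-walk at the all-zeros vertex
whose intermediate vertices are nonzero only in coordinate `i`. -/
def IsGroundWalk (d q : ℕ) [NeZero q] (i : Fin d) (l : List (Fin d → Fin q)) : Prop :=
  ∃ a b : Fin q, a ≠ 0 ∧ b ≠ 0 ∧ a ≠ b ∧
    l = [(0 : Fin d → Fin q), Function.update (0 : Fin d → Fin q) i a,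
      Function.update (0 : Fin d → Fin q) i b, 0]

/-- Number of steps of a walk in which coordinate `i` changes. -/
def changeCount {d q : ℕ} (i : Fin d) : List (Fin d → Fin q) → ℕ
  | x :: y :: rest => (if x i = y i then 0 else 1) + changeCount i (y :: rest)
  | _ => 0

/-!
Weight each vertex of the hypercube by its number of ones. A nontrivial closed walk at `0` rises
at its first step and returns to `0`, so it has a strict peak `a, b, c`. If `a = c` a prune
removes it; otherwise `b` differs from `a` and from `c` in two distinct coordinates, and clearing
in `a` the coordinate where `b` and `c` differ gives a common neighbour of `a` and `c` below `b`,
to which a spider move lowers the peak. Both moves decrease the total weight of the walk.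
-/

section Peaks

variable {α : Type*} (h : α → ℕ)

theorem exists_peak_of_isChain_ne {u v w : α} {l : List α}
    (hc : (u :: v :: l).IsChain (fun x y => h x ≠ h y)) (hup : h u < h v)
    (hlast : (v :: l).getLast? = some w) (hw : h w < h v) :
    ∃ xs a b c ys, u :: v :: l = xs ++ a :: b :: c :: ys ∧ h a < h b ∧ h c < h b := by
  induction l generalizing u v with
  | nil => simp_all
  | cons c rest ih =>
    obtain ⟨-, hvc, hc'⟩ := List.isChain_cons_cons.1 hc |>.imp_right List.isChain_cons_cons.1
    rcases lt_or_gt_of_ne hvc with hvc | hvc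
    · obtain ⟨xs, a, b, c', ys, heq, hab, hcb⟩ :=
        ih (List.isChain_cons_cons.2 ⟨hvc.ne, hc'⟩) hvc (by simpa using hlast) (by omega)
      exact ⟨u :: xs, a, b, c', ys, by rw [heq, List.cons_append], hab, hcb⟩
    · exact ⟨[], u, v, c, rest, rfl, hup, hvc⟩

end Peaks

section Moves

variable {V : Type*} {G : SimpleGraph V}

theorem Move.isWalkOn {a b : V} {l l' : List V} (hm : Move G l l')
    (hl : IsWalkOn G a b l) : IsWalkOn G a b l' := by
  obtain ⟨hc, hhead, hlast⟩ := hl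
  -- `IsWalkOn` is phrased with the alias `List.Chain'`, opaque to the `List.IsChain` simp set
  replace hc : l.IsChain G.Adj := hc
  cases hm with
  | prune xs ys u v =>
    rw [List.isChain_split, List.isChain_cons_cons, List.isChain_cons_cons] at hc
    refine ⟨(List.isChain_split.2 ⟨hc.1, hc.2.2.2⟩ : List.IsChain _ _), ?_, ?_⟩
    · cases xs <;> simp_all
    · simp_all
  | spider xs ys u v v' w _ h1 h2 =>
    simp only [List.isChain_append_cons_cons, List.isChain_cons_cons] at hc
    have hc' : (xs ++ u :: v' :: w :: ys).IsChain G.Adj := by simp_all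
    refine ⟨hc', ?_, ?_⟩
    · cases xs <;> simp_all
    · simp_all

end Moves

section Grading

variable {V : Type*}

def PeaksLowerable (G : SimpleGraph V) (h : V → ℕ) : Prop :=
  ∀ ⦃a b c⦄, G.Adj a b → G.Adj b c → a ≠ c → h a < h b → h c < h b →
    ∃ v, G.Adj a v ∧ G.Adj v c ∧ h v < h b

variable {G : SimpleGraph V} {h : V → ℕ}

theorem exists_move_sum_map_lt (hadj : ∀ ⦃u v⦄, G.Adj u v → h u ≠ h v)
    (hpeak : PeaksLowerable G h) {z : V} (hz : ∀ v, h z ≤ h v) {l : List V}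
    (hl : IsWalkOn G z z l) (hne : l ≠ [z]) :
    ∃ l', Move G l l' ∧ (l'.map h).sum < (l.map h).sum := by
  obtain ⟨hc, hhead, hlast⟩ := hl
  replace hc : l.IsChain G.Adj := hc
  obtain ⟨v, rest, rfl⟩ : ∃ v rest, l = z :: v :: rest := by
    rcases l with _ | ⟨x, _ | ⟨v, rest⟩⟩ <;> simp_all
  have hzv : h z < h v := lt_of_le_of_ne (hz v) (hadj (List.isChain_cons_cons.1 hc).1)
  obtain ⟨xs, a, b, c, ys, heq, hab, hcb⟩ :=
    exists_peak_of_isChain_ne h (hc.imp hadj) hzv (by simpa using hlast) hzv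
  rw [heq] at hc ⊢
  simp only [List.isChain_append_cons_cons] at hc
  obtain ⟨-, hGab, hbc⟩ := hc
  have hGbc := (List.isChain_cons_cons.1 hbc).1
  rcases eq_or_ne c a with rfl | hac
  · refine ⟨xs ++ c :: ys, .prune xs ys c b hGab, ?_⟩
    simp only [List.map_append, List.map_cons, List.sum_append, List.sum_cons]
    omega
  · obtain ⟨v', hav', hv'c, hv'b⟩ := hpeak hGab hGbc hac.symm hab hcb
    have hbv' : b ≠ v' := fun e => hv'b.ne' (congrArg h e)
    refine ⟨xs ++ a :: v' :: c :: ys, .spider xs ys a b v' c hbv' hav' hv'c, ?_⟩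
    simp only [List.map_append, List.map_cons, List.sum_append, List.sum_cons]
    omega

theorem homotopic_singleton_of_peaksLowerable (hadj : ∀ ⦃u v⦄, G.Adj u v → h u ≠ h v)
    (hpeak : PeaksLowerable G h) {z : V} (hz : ∀ v, h z ≤ h v) (l : List V)
    (hl : IsWalkOn G z z l) : Homotopic G l [z] := by
  by_cases hne : l = [z]
  · exact hne ▸ .refl _
  obtain ⟨l', hm, hlt⟩ := exists_move_sum_map_lt hadj hpeak hz hl hne
  exact .trans _ _ _ (.rel _ _ hm)
    (homotopic_singleton_of_peaksLowerable hadj hpeak hz l' (hm.isWalkOn hl))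
termination_by (l.map h).sum

end Grading

section Hamming

variable {d q : ℕ}

theorem hammingGraph_adj_iff {u v : Fin d → Fin q} :
    (hammingGraph d q).Adj u v ↔ ∃ i, DiffAt u v i := by
  constructor
  · rintro ⟨i, hi, hu⟩
    exact ⟨i, hi, fun j hj => by_contra fun hne => hj (hu j hne)⟩
  · rintro ⟨i, hi, hu⟩
    exact ⟨i, hi, fun j hne => by_contra fun hj => hne (hu j hj)⟩

theorem DiffAt.symm {u v : Fin d → Fin q} {i : Fin d} (huv : DiffAt u v i) : DiffAt v u i :=
  ⟨huv.1.symm, fun j hj => (huv.2 j hj).symm⟩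

def coordSum (v : Fin d → Fin q) : ℕ := ∑ j, (v j : ℕ)

@[simp]
theorem coordSum_zero [NeZero q] : coordSum (0 : Fin d → Fin q) = 0 := by
  simp [coordSum]

open Finset in
theorem DiffAt.coordSum_add {u v : Fin d → Fin q} {i : Fin d} (huv : DiffAt u v i) :
    coordSum u + v i = coordSum v + u i := by
  have hrest : ∑ j ∈ univ.erase i, (u j : ℕ) = ∑ j ∈ univ.erase i, (v j : ℕ) :=
    sum_congr rfl fun j hj => by rw [huv.2 j (ne_of_mem_erase hj)]
  rw [coordSum, coordSum, ← add_sum_erase _ _ (mem_univ i), ← add_sum_erase _ _ (mem_univ i),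
    hrest]
  ring

theorem hammingGraph_coordSum_ne_of_adj ⦃u v : Fin d → Fin q⦄
    (huv : (hammingGraph d q).Adj u v) : coordSum u ≠ coordSum v := by
  obtain ⟨i, hi⟩ := hammingGraph_adj_iff.1 huv
  have hval : (u i : ℕ) ≠ v i := Fin.val_ne_of_ne hi.1
  have := hi.coordSum_add
  omega

theorem DiffAt.eq_zero_one_of_coordSum_lt {u v : Fin d → Fin 2} {i : Fin d}
    (huv : DiffAt u v i) (hlt : coordSum u < coordSum v) : u i = 0 ∧ v i = 1 := by
  have := huv.coordSum_add
  have := (v i).isLt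
  simp only [Fin.ext_iff, Fin.val_zero, Fin.val_one]
  omega

theorem hammingGraph_two_peaksLowerable : PeaksLowerable (hammingGraph d 2) coordSum := by
  intro a b c hab hbc hac hab' hcb'
  obtain ⟨i, hi⟩ := hammingGraph_adj_iff.1 hab
  obtain ⟨j, hj⟩ := hammingGraph_adj_iff.1 hbc
  obtain ⟨hai, hbi⟩ := hi.eq_zero_one_of_coordSum_lt hab'
  obtain ⟨hcj, hbj⟩ := hj.symm.eq_zero_one_of_coordSum_lt hcb'
  have hij : i ≠ j := by
    rintro rfl
    refine hac (funext fun k => ?_)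
    by_cases hk : k = i
    · rw [hk, hai, hcj]
    · rw [hi.2 k hk, hj.2 k hk]
  have hav : DiffAt a (Function.update a j 0) j :=
    ⟨by simp [hi.2 j hij.symm, hbj], fun k hk => (Function.update_of_ne hk _ _).symm⟩
  refine ⟨Function.update a j 0, hammingGraph_adj_iff.2 ⟨j, hav⟩,
    hammingGraph_adj_iff.2 ⟨i, ?_, fun k hk => ?_⟩, ?_⟩
  · rw [Function.update_of_ne hij, hai, ← hj.2 i hij, hbi]
    decide
  · by_cases hkj : k = j
    · rw [hkj, Function.update_self, hcj]
    · rw [Function.update_of_ne hkj, hi.2 k hk, hj.2 k hkj]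
  · have := hav.coordSum_add
    simp only [Function.update_self, Fin.val_zero, hi.2 j hij.symm, hbj, Fin.val_one] at this
    omega

end Hamming

/-- every closed walk in the hypercube `H(d,2)` based at the all-zeros
vertex is ×-homotopic rel endpoints to the trivial walk. -/
theorem stmt5 (d : ℕ) (l : List (Fin d → Fin 2))
    (hl : IsWalkOn (hammingGraph d 2) 0 0 l) :
    Homotopic (hammingGraph d 2) l [0] :=
  homotopic_singleton_of_peaksLowerable hammingGraph_coordSum_ne_of_adj
    hammingGraph_two_peaksLowerable (fun v => by simp) l hl
end

section
/- In H(d,q), any closed subwalk of the form (v, w, x, v) where all four vertices agree in all coordinates except coordinate i (i.e., a closed 3-walk within the K_q fiber of coordinate i through v) appearing in a closed walk W = K * (v,w,x,v) * K^{-1} based at the all-zeros vertex, is such that W is ×-homotopic rel endpoints to a product K' * U_i * K'^{-1} where U_i is a ground walk in coordinate i conjugated appropriately; in particular, W is equivalent to a ground walk in coordinate i. -/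
/-! A closed 3-walk in the coordinate-`i` fiber is slid down the conjugating walk one edge
at a time. When the next vertex `u` lies in the same fiber, a prune (preceded by a spider move
unless `u` is a vertex of the triangle) absorbs the edge `uv` into the triangle. Otherwise `u`
differs from `v` in a coordinate `j ≠ i`, and three spider moves and a prune replace the
triangle at `v` by its translate in coordinate `j`, the triangle at `u`. At the all-zeros
vertex the triangle is a ground walk. -/

open Function

theorem Move.append_append {V : Type*} {G : SimpleGraph V} {l l' : List V} (h : Move G l l')
    (N T : List V) :
    Move G (N ++ l ++ T) (N ++ l' ++ T) := by
  cases h with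
  | prune xs ys u v huv => simpa using Move.prune (N ++ xs) (ys ++ T) u v huv
  | spider xs ys u v v' w hne h₁ h₂ =>
    simpa using Move.spider (N ++ xs) (ys ++ T) u v v' w hne h₁ h₂

namespace Homotopic

variable {V : Type*} {G : SimpleGraph V}

theorem refl (l : List V) : Homotopic G l l := Relation.EqvGen.refl l

theorem trans {l₁ l₂ l₃ : List V} (h₁₂ : Homotopic G l₁ l₂) (h₂₃ : Homotopic G l₂ l₃) :
    Homotopic G l₁ l₃ :=
  Relation.EqvGen.trans _ _ _ h₁₂ h₂₃

theorem append_append {l l' : List V} (h : Homotopic G l l') (N T : List V) :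
    Homotopic G (N ++ l ++ T) (N ++ l' ++ T) := by
  induction h with
  | rel _ _ hm => exact Relation.EqvGen.rel _ _ (hm.append_append N T)
  | refl => exact refl _
  | symm _ _ _ ih => exact Relation.EqvGen.symm _ _ ih
  | trans _ _ _ _ _ ih₁ ih₂ => exact ih₁.trans ih₂

theorem cons {l l' : List V} (h : Homotopic G l l') (a : V) : Homotopic G (a :: l) (a :: l') := by
  simpa using h.append_append [a] []

theorem prune {u v : V} (huv : G.Adj u v) (ys : List V) :
    Homotopic G (u :: v :: u :: ys) (u :: ys) :=
  .rel _ _ (by simpa using Move.prune [] ys u v huv)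

theorem spider {u v v' w : V} (h₁ : G.Adj u v') (h₂ : G.Adj v' w) (ys : List V) :
    Homotopic G (u :: v :: w :: ys) (u :: v' :: w :: ys) := by
  rcases eq_or_ne v v' with rfl | hne
  · exact refl _
  · exact .rel _ _ (by simpa using Move.spider [] ys u v v' w hne h₁ h₂)

end Homotopic

theorem IsWalkOn.dropLast {V : Type*} {G : SimpleGraph V} {a u v : V} {P : List V}
    (h : IsWalkOn G a v (P ++ [u] ++ [v])) : IsWalkOn G a u (P ++ [u]) ∧ G.Adj u v := by
  obtain ⟨hchain, hhead, -⟩ := h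
  rw [List.Chain', List.isChain_append] at hchain
  exact ⟨⟨hchain.1, by simpa using hhead, by simp⟩, hchain.2.2 u (by simp) v (by simp)⟩

namespace hammingGraph

variable {d q : ℕ}

theorem adj_update_iff {f : Fin d → Fin q} {j : Fin d} {c : Fin q} :
    (hammingGraph d q).Adj f (update f j c) ↔ f j ≠ c := by
  refine ⟨fun h hc => h.ne (by rw [← hc, update_eq_self]), fun hc => ⟨j, by simpa using hc, ?_⟩⟩
  intro k hk
  by_contra hkj
  exact hk (by rw [update_of_ne hkj])

theorem adj_update_update_iff {f : Fin d → Fin q} {i : Fin d} {a b : Fin q} :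
    (hammingGraph d q).Adj (update f i a) (update f i b) ↔ a ≠ b := by
  simpa using adj_update_iff (f := update f i a) (j := i) (c := b)

theorem exists_eq_update_of_adj {f g : Fin d → Fin q} (h : (hammingGraph d q).Adj f g) :
    ∃ j c, f j ≠ c ∧ g = update f j c := by
  obtain ⟨j, hj, huniq⟩ := h
  refine ⟨j, g j, hj, eq_update_iff.2 ⟨rfl, fun k hk => ?_⟩⟩
  by_contra hfg
  exact hk (huniq k (Ne.symm hfg))

variable {i : Fin d} {v : Fin d → Fin q} {a b : Fin q}

theorem homotopic_conj_triangle_of_eq_vertex (ha : v i ≠ a) :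
    Homotopic (hammingGraph d q) [update v i a, v, update v i a, update v i b, v, update v i a]
      [update v i a, update v i b, v, update v i a] :=
  Homotopic.prune (adj_update_iff.2 ha).symm _

theorem homotopic_conj_triangle_of_same_fiber {c : Fin q} (hc : v i ≠ c) (hca : c ≠ a) :
    Homotopic (hammingGraph d q)
      [update v i c, v, update v i a, update v i b, v, update v i c]
      [update v i c, v, update v i a, update v i c] := by
  have hcv : (hammingGraph d q).Adj (update v i c) v := (adj_update_iff.2 hc).symm
  exact (((Homotopic.spider (adj_update_update_iff.2 hca.symm) hcv _).cons _).cons _).trans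
    ((((Homotopic.prune hcv []).cons _).cons _).cons _)

theorem homotopic_conj_triangle_of_ne_coord {j : Fin d} {c : Fin q} (hji : j ≠ i) (hc : v j ≠ c)
    (ha : v i ≠ a) (hab : a ≠ b) (hb : b ≠ v i) :
    Homotopic (hammingGraph d q)
      [update v j c, v, update v i a, update v i b, v, update v j c]
      [update v j c, update (update v j c) i a, update (update v j c) i b, update v j c] := by
  have hui : update v j c i = v i := update_of_ne hji.symm _ _
  have huv : (hammingGraph d q).Adj (update v j c) v := (adj_update_iff.2 hc).symm
  have hshift : ∀ e, (hammingGraph d q).Adj (update (update v j c) i e) (update v i e) := by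
    intro e
    rw [update_comm hji]
    exact (adj_update_iff.2 (by rwa [update_of_ne hji])).symm
  have h₁ := Homotopic.spider (v := v) (adj_update_iff.2 (hui ▸ ha)) (hshift a)
    [update v i b, v, update v j c]
  have h₂ := Homotopic.spider (v := update v i a) (adj_update_update_iff.2 hab) (hshift b)
    [v, update v j c]
  have h₃ := Homotopic.spider (v := update v i b) (adj_update_iff.2 (hui ▸ hb.symm)).symm huv
    [update v j c]
  have h₄ := Homotopic.prune huv []
  exact h₁.trans ((h₂.cons _).trans (((h₃.cons _).cons _).trans (((h₄.cons _).cons _).cons _)))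

theorem exists_homotopic_conj_triangle {u : Fin d → Fin q} (huv : (hammingGraph d q).Adj u v)
    (ha : v i ≠ a) (hab : a ≠ b) (hb : b ≠ v i) :
    ∃ a' b', u i ≠ a' ∧ a' ≠ b' ∧ b' ≠ u i ∧ Homotopic (hammingGraph d q)
      [u, v, update v i a, update v i b, v, u] [u, update u i a', update u i b', u] := by
  obtain ⟨j, c, hc, rfl⟩ := exists_eq_update_of_adj huv.symm
  rcases eq_or_ne j i with rfl | hji
  · rcases eq_or_ne c a with rfl | hca
    · refine ⟨b, v j, by simpa using hab, hb, by simpa using ha, ?_⟩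
      simpa using homotopic_conj_triangle_of_eq_vertex (b := b) ha
    · refine ⟨v j, a, by simpa using hc.symm, ha, by simpa using hca.symm, ?_⟩
      simpa using homotopic_conj_triangle_of_same_fiber (b := b) hc hca
  · have hui : update v j c i = v i := update_of_ne hji.symm _ _
    exact ⟨a, b, hui ▸ ha, hab, hui ▸ hb, homotopic_conj_triangle_of_ne_coord hji hc ha hab hb⟩

theorem exists_isGroundWalk_homotopic_conj [NeZero q] (P : List (Fin d → Fin q))
    (hP : IsWalkOn (hammingGraph d q) 0 v (P ++ [v])) (ha : v i ≠ a) (hab : a ≠ b)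
    (hb : b ≠ v i) :
    ∃ U, IsGroundWalk d q i U ∧ Homotopic (hammingGraph d q)
      (P ++ [v, update v i a, update v i b, v] ++ P.reverse) U := by
  induction P using List.reverseRecOn generalizing v a b with
  | nil =>
    obtain rfl : v = 0 := by simpa using hP.2.1
    exact ⟨_, ⟨a, b, Ne.symm ha, hb, hab, rfl⟩, by simpa using Homotopic.refl _⟩
  | append_singleton P u ih =>
    obtain ⟨hPu, huv⟩ := hP.dropLast
    obtain ⟨a', b', ha', hab', hb', hslide⟩ := exists_homotopic_conj_triangle huv ha hab hb
    obtain ⟨U, hU, hUK⟩ := ih hPu ha' hab' hb'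
    exact ⟨U, hU, by simpa using (hslide.append_append P P.reverse).trans (by simpa using hUK)⟩

end hammingGraph

theorem stmt14_general (d q : ℕ) [NeZero q] (i : Fin d)
    (v w x : Fin d → Fin q) (K : List (Fin d → Fin q))
    (hK : IsWalkOn (hammingGraph d q) 0 v K)
    (hw : ∀ j, j ≠ i → w j = v j) (hx : ∀ j, j ≠ i → x j = v j)
    (h1 : (hammingGraph d q).Adj v w) (h2 : (hammingGraph d q).Adj w x)
    (h3 : (hammingGraph d q).Adj x v) :
    ∃ U, IsGroundWalk d q i U ∧
      Homotopic (hammingGraph d q) (wcat (wcat K [v, w, x, v]) K.reverse) U := by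
  obtain ⟨P, rfl⟩ := List.getLast?_eq_some_iff.1 hK.2.2
  obtain ⟨a, rfl⟩ : ∃ a, w = update v i a := ⟨w i, eq_update_iff.2 ⟨rfl, hw⟩⟩
  obtain ⟨b, rfl⟩ : ∃ b, x = update v i b := ⟨x i, eq_update_iff.2 ⟨rfl, hx⟩⟩
  obtain ⟨U, hU, hPU⟩ := hammingGraph.exists_isGroundWalk_homotopic_conj P hK
    (hammingGraph.adj_update_iff.1 h1) (hammingGraph.adj_update_update_iff.1 h2)
    (hammingGraph.adj_update_iff.1 h3.symm).symm
  exact ⟨U, hU, by simpa [wcat] using hPU⟩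

/-- a closed walk of the form `K * (v,w,x,v) * K⁻¹` based at the
all-zeros vertex, where the closed 3-walk `(v,w,x,v)` lies in the `K_q` fiber of
coordinate `i`, is ×-homotopic rel endpoints to a ground walk in coordinate `i`. -/
theorem stmt14 (d q : ℕ) [NeZero q] (hq : 3 ≤ q) (i : Fin d)
    (v w x : Fin d → Fin q) (K : List (Fin d → Fin q))
    (hK : IsWalkOn (hammingGraph d q) 0 v K)
    (hw : ∀ j, j ≠ i → w j = v j) (hx : ∀ j, j ≠ i → x j = v j)
    (h1 : (hammingGraph d q).Adj v w) (h2 : (hammingGraph d q).Adj w x)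
    (h3 : (hammingGraph d q).Adj x v) :
    ∃ U, IsGroundWalk d q i U ∧
      Homotopic (hammingGraph d q) (wcat (wcat K [v, w, x, v]) K.reverse) U :=
  stmt14_general d q i v w x K hK hw hx h1 h2 h3
end
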